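/- Let 0 < r ≤ 1 with 1/r not an integer, k = ⌊1/r⌋, and for large n set m = n − k⌈rn⌉ and l = (k+1)⌈rn⌉ − n. Define q(β,α) = min{ Σ_i ω(α·β_i, α) : β_i positive integers with Σ β_i = β }. Then Q(n, ⌈rn⌉) ≤ q(l,k) + q(m,k+1). -/

import Mathlib

open SimpleGraph

/-- The independence number of a graph: clique number of the complement. -/
noncomputable def indepNum {V : Type*} (G : SimpleGraph V) : ℕ := Gᶜ.cliqueNum

/-- The chromatic number of a graph, as a natural number. -/
noncomputable def chi {V : Type*} (G : SimpleGraph V) : ℕ := G.chromaticNumber.toNat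

/-- The inverse Ramsey number ω(n,k): minimum clique number over graphs on
`n` vertices with independence number at most `k`. -/
noncomputable def invRamsey (n k : ℕ) : ℕ :=
  sInf {w | ∃ G : SimpleGraph (Fin n), _root_.indepNum G ≤ k ∧ G.cliqueNum = w}

/-- Q(n,c): minimum clique number over graphs on `n` vertices with chromatic number `c`. -/
noncomputable def Q (n c : ℕ) : ℕ :=
  sInf {w | ∃ G : SimpleGraph (Fin n), chi G = c ∧ G.cliqueNum = w}

/-- q(β,α): minimum of Σ ω(α·βᵢ, α) over partitions of β into positive integers βᵢ. -/
noncomputable def qfun (β α : ℕ) : ℕ :=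
  sInf {s | ∃ L : List ℕ, (∀ b ∈ L, 0 < b) ∧ L.sum = β ∧
    (L.map fun b => invRamsey (α * b) α).sum = s}

/-! Join Ramsey graphs: `l` parts with `α ≤ k` on `k·lᵢ` vertices and `m` parts with `α ≤ k + 1`
on `(k+1)·mⱼ` vertices. Since `|V| ≤ χ·α`, each part has `χ ≥ lᵢ` (resp. `mⱼ`), and chromatic
numbers add under joins while clique numbers are subadditive. As `1/r ∉ ℤ`, eventually
`k⌈rn⌉ ≤ n ≤ (k+1)⌈rn⌉`, so the vertex count `kl + (k+1)m` is exactly `n` and `l + m = ⌈rn⌉`.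
Finally, deleting edges one at a time lowers `χ` by at most one each step, so some spanning
subgraph has `χ = ⌈rn⌉` exactly, and its clique number is no larger. -/

namespace SimpleGraph

variable {V W : Type*}

lemma Copy.cliqueNum_le [Finite W] {G : SimpleGraph V} {H : SimpleGraph W} (f : Copy G H) :
    G.cliqueNum ≤ H.cliqueNum := by
  obtain ⟨s, hs⟩ := G.exists_isNClique_cliqueNum
  rw [← hs.card_eq, ← s.card_map f.toEmbedding]
  refine IsClique.card_le_cliqueNum (tc := ?_)
  rintro _ hx _ hy hxy
  simp only [Finset.coe_map, Set.mem_image, Finset.mem_coe] at hx hy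
  obtain ⟨a, ha, rfl⟩ := hx
  obtain ⟨b, hb, rfl⟩ := hy
  exact f.toHom.map_adj (hs.isClique ha hb (ne_of_apply_ne _ hxy))

lemma colorable_succ_of_colorable_deleteEdges [DecidableEq V] {G : SimpleGraph V} {n : ℕ}
    (u v : V) (h : (G.deleteEdges {s(u, v)}).Colorable n) : G.Colorable (n + 1) := by
  obtain ⟨C⟩ := h
  refine ⟨Coloring.mk (fun x => if x = u then Fin.last n else (C x).castSucc) ?_⟩
  intro x y hxy
  by_cases hx : x = u <;> by_cases hy : y = u <;> simp only [hx, hy, if_true, if_false]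
  · exact absurd (hx.trans hy.symm) hxy.ne
  · exact (Fin.castSucc_lt_last _).ne'
  · exact (Fin.castSucc_lt_last _).ne
  · refine (Fin.castSucc_injective n).ne (C.valid ?_)
    simp [deleteEdges_adj, hxy, hx, hy]

def join (G : SimpleGraph V) (H : SimpleGraph W) : SimpleGraph (V ⊕ W) :=
  (G ⊕g H) ⊔ completeBipartiteGraph V W

section join
variable {G : SimpleGraph V} {H : SimpleGraph W}

@[simp] lemma join_adj_inl_inl {a a' : V} : (G.join H).Adj (.inl a) (.inl a') ↔ G.Adj a a' := by
  simp [join]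

@[simp] lemma join_adj_inr_inr {b b' : W} : (G.join H).Adj (.inr b) (.inr b') ↔ H.Adj b b' := by
  simp [join]

@[simp] lemma join_adj_inl_inr {a : V} {b : W} : (G.join H).Adj (.inl a) (.inr b) := by
  simp [join]

def Hom.inlJoin : G →g G.join H := ⟨Sum.inl, join_adj_inl_inl.2⟩

def Hom.inrJoin : H →g G.join H := ⟨Sum.inr, join_adj_inr_inr.2⟩

lemma cliqueNum_join_le [Finite V] [Finite W] :
    (G.join H).cliqueNum ≤ G.cliqueNum + H.cliqueNum := by
  obtain ⟨s, hs⟩ := (G.join H).exists_isNClique_cliqueNum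
  rw [← hs.card_eq, ← Finset.card_toLeft_add_card_toRight]
  refine add_le_add (IsClique.card_le_cliqueNum (tc := ?_)) (IsClique.card_le_cliqueNum (tc := ?_))
  · intro a ha a' ha' hne
    exact join_adj_inl_inl.1 (hs.isClique (Finset.mem_toLeft.1 ha) (Finset.mem_toLeft.1 ha')
      (Sum.inl_injective.ne hne))
  · intro b hb b' hb' hne
    exact join_adj_inr_inr.1 (hs.isClique (Finset.mem_toRight.1 hb) (Finset.mem_toRight.1 hb')
      (Sum.inr_injective.ne hne))

end join

end SimpleGraph

section chi
open Finset

variable {V W α : Type*} {G : SimpleGraph V}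

lemma indepNum_eq_indepNum (G : SimpleGraph V) : _root_.indepNum G = G.indepNum :=
  cliqueNum_compl

lemma chi_colorable [Finite V] (G : SimpleGraph V) : G.Colorable (chi G) :=
  G.colorable_chromaticNumber_of_fintype

lemma chi_le_of_colorable {n : ℕ} (h : G.Colorable n) : chi G ≤ n :=
  ENat.toNat_le_of_le_natCast h.chromaticNumber_le

lemma chi_congr {H : SimpleGraph W} (e : G ≃g H) : chi G = chi H :=
  congrArg ENat.toNat (chromaticNumber_congr e)

lemma chi_le_card_image [Fintype V] [DecidableEq α] (C : G.Coloring α) :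
    chi G ≤ #(univ.image C) := by
  let C' : G.Coloring (univ.image C) :=
    Coloring.mk (fun v => ⟨C v, mem_image_of_mem C (mem_univ v)⟩)
      fun h e => C.valid h (congrArg Subtype.val e)
  simpa using chi_le_of_colorable C'.colorable

lemma card_le_chi_mul_indepNum [Fintype V] (G : SimpleGraph V) :
    Fintype.card V ≤ chi G * G.indepNum := by
  classical
  obtain ⟨C⟩ := chi_colorable G
  calc Fintype.card V ≤ G.indepNum * #(univ.image C) :=
        card_le_mul_card_image _ _ fun c _ =>
          IsIndepSet.card_le_indepNum
            (by simpa [Coloring.colorClass] using C.isIndepSet_colorClass c)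
    _ ≤ G.indepNum * chi G := Nat.mul_le_mul_left _ ((card_le_univ _).trans_eq (by simp))
    _ = chi G * G.indepNum := mul_comm _ _

lemma chi_add_chi_le_chi_join [Fintype V] [Fintype W] (G : SimpleGraph V) (H : SimpleGraph W) :
    chi G + chi H ≤ chi (G.join H) := by
  classical
  obtain ⟨C⟩ := chi_colorable (G.join H)
  have hdisj : Disjoint (univ.image (C.comp Hom.inlJoin))
      (univ.image (C.comp Hom.inrJoin)) := by
    simp only [Finset.disjoint_left, mem_image, mem_univ, true_and]
    rintro _ ⟨a, rfl⟩ ⟨b, hb⟩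
    exact C.valid join_adj_inl_inr hb.symm
  calc chi G + chi H
      ≤ #(univ.image (C.comp Hom.inlJoin)) + #(univ.image (C.comp Hom.inrJoin)) :=
        add_le_add (chi_le_card_image _) (chi_le_card_image _)
    _ = #(univ.image (C.comp Hom.inlJoin) ∪ univ.image (C.comp Hom.inrJoin)) :=
        (card_union_of_disjoint hdisj).symm
    _ ≤ chi (G.join H) := (card_le_univ _).trans_eq (by simp)

lemma exists_le_chi_eq [Finite V] {c : ℕ} (hc : 1 ≤ c) (hG : c ≤ chi G) :
    ∃ H ≤ G, chi H = c := by
  classical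
  obtain ⟨H, hHG, hcH, hmin⟩ := exists_minimal_le_of_wellFoundedLT (fun H => c ≤ chi H) G hG
  refine ⟨H, hHG, le_antisymm (not_lt.1 fun hlt => ?_) hcH⟩
  obtain ⟨u, v, huv⟩ := ne_bot_iff_exists_adj.1 fun hbot => by
    have : chi H ≤ 1 := chi_le_of_colorable (colorable_one_iff.2 hbot)
    omega
  set H' := H.deleteEdges {s(u, v)}
  -- deleting one edge lowers the chromatic number by at most one, against minimality
  have hcH' : c ≤ chi H' := by
    have := chi_le_of_colorable (colorable_succ_of_colorable_deleteEdges u v (chi_colorable H'))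
    omega
  have hlt : H' < H := (deleteEdges_le _).lt_of_ne fun h => by
    rw [← h] at huv
    simp at huv
  exact hlt.not_ge (hmin hcH' hlt.le)

end chi

section fin
variable {V : Type*}

lemma exists_iso_fin [Fintype V] {n : ℕ} (h : Fintype.card V = n) (G : SimpleGraph V) :
    ∃ G' : SimpleGraph (Fin n), Nonempty (G' ≃g G) :=
  ⟨G.comap (Fintype.equivFinOfCardEq h).symm, ⟨Iso.comap _ G⟩⟩

lemma exists_fin_join {a b n : ℕ} (h : a + b = n) (G₁ : SimpleGraph (Fin a))
    (G₂ : SimpleGraph (Fin b)) :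
    ∃ G : SimpleGraph (Fin n), chi G₁ + chi G₂ ≤ chi G ∧
      G.cliqueNum ≤ G₁.cliqueNum + G₂.cliqueNum := by
  obtain ⟨G, ⟨e⟩⟩ := exists_iso_fin (by simpa using h) (G₁.join G₂)
  exact ⟨G, (chi_add_chi_le_chi_join G₁ G₂).trans_eq (chi_congr e).symm,
    e.toCopy.cliqueNum_le.trans cliqueNum_join_le⟩

lemma le_chi_of_indepNum_le [Fintype V] {G : SimpleGraph V} {α b : ℕ} (hα : 0 < α)
    (hG : G.indepNum ≤ α) (hcard : Fintype.card V = α * b) : b ≤ chi G := by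
  refine Nat.le_of_mul_le_mul_left ?_ hα
  calc α * b = Fintype.card V := hcard.symm
    _ ≤ chi G * G.indepNum := card_le_chi_mul_indepNum G
    _ ≤ chi G * α := Nat.mul_le_mul_left _ hG
    _ = α * chi G := mul_comm _ _

lemma invRamsey_spec (N : ℕ) {α : ℕ} (hα : 1 ≤ α) :
    ∃ G : SimpleGraph (Fin N), _root_.indepNum G ≤ α ∧ G.cliqueNum = invRamsey N α := by
  have hbot : ((⊥ : SimpleGraph (Fin N)).cliqueNum : ℕ∞) ≤ 1 :=
    cliqueNum_le_chromaticNumber.trans (colorable_one_iff.2 rfl).chromaticNumber_le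
  have hne : {w | ∃ G : SimpleGraph (Fin N), _root_.indepNum G ≤ α ∧ G.cliqueNum = w}.Nonempty :=
    ⟨_, ⊤, by simpa [_root_.indepNum] using (show _ ≤ 1 by exact_mod_cast hbot).trans hα, rfl⟩
  exact Nat.sInf_mem hne

lemma exists_graph_invRamsey {α : ℕ} (hα : 1 ≤ α) (b : ℕ) :
    ∃ G : SimpleGraph (Fin (α * b)), b ≤ chi G ∧ G.cliqueNum = invRamsey (α * b) α := by
  obtain ⟨G, hG, hω⟩ := invRamsey_spec (α * b) hα
  exact ⟨G, le_chi_of_indepNum_le hα (indepNum_eq_indepNum G ▸ hG) (Fintype.card_fin _), hω⟩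

lemma exists_graph_of_list {α : ℕ} (hα : 1 ≤ α) (L : List ℕ) :
    ∃ G : SimpleGraph (Fin (α * L.sum)), L.sum ≤ chi G ∧
      G.cliqueNum ≤ (L.map fun b => invRamsey (α * b) α).sum := by
  induction L with
  | nil =>
    obtain ⟨s, hs⟩ := (⊥ : SimpleGraph (Fin (α * [].sum))).exists_isNClique_cliqueNum
    exact ⟨⊥, by simp, by rw [← hs.card_eq]; simpa using s.card_le_univ⟩
  | cons b L ih =>
    obtain ⟨G₁, hχ₁, hω₁⟩ := exists_graph_invRamsey hα b
    obtain ⟨G₂, hχ₂, hω₂⟩ := ih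
    obtain ⟨G, hχ, hω⟩ :=
      exists_fin_join (n := α * (b :: L).sum) (by rw [List.sum_cons, mul_add]) G₁ G₂
    exact ⟨G, by simpa using (add_le_add hχ₁ hχ₂).trans hχ,
      by simpa using hω.trans (add_le_add hω₁.le hω₂)⟩

lemma qfun_spec (β α : ℕ) :
    ∃ L : List ℕ, (∀ b ∈ L, 0 < b) ∧ L.sum = β ∧
      (L.map fun b => invRamsey (α * b) α).sum = qfun β α := by
  have hne : {s | ∃ L : List ℕ, (∀ b ∈ L, 0 < b) ∧ L.sum = β ∧
      (L.map fun b => invRamsey (α * b) α).sum = s}.Nonempty :=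
    ⟨_, List.replicate β 1, by simp, by simp, rfl⟩
  exact Nat.sInf_mem hne

lemma exists_graph_qfun {α : ℕ} (hα : 1 ≤ α) (β : ℕ) :
    ∃ G : SimpleGraph (Fin (α * β)), β ≤ chi G ∧ G.cliqueNum ≤ qfun β α := by
  obtain ⟨L, -, rfl, hq⟩ := qfun_spec β α
  exact hq ▸ exists_graph_of_list hα L

lemma Q_le_cliqueNum {n c : ℕ} (hc : 1 ≤ c) {G : SimpleGraph (Fin n)} (hG : c ≤ chi G) :
    Q n c ≤ G.cliqueNum := by
  obtain ⟨H, hHG, hH⟩ := exists_le_chi_eq hc hG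
  calc Q n c ≤ H.cliqueNum := Nat.sInf_le ⟨H, hH, rfl⟩
    _ ≤ G.cliqueNum := (Copy.ofLE H G hHG).cliqueNum_le

end fin

section ceil
open Filter

variable {r : ℝ}

lemma one_le_floor_one_div (hr0 : 0 < r) (hr1 : r ≤ 1) : 1 ≤ ⌊1 / r⌋₊ :=
  Nat.le_floor (by rw [Nat.cast_one, le_div_iff₀ hr0]; linarith)

lemma floor_one_div_mul_lt_one (hr0 : 0 < r) (hint : ¬ ∃ z : ℤ, 1 / r = z) :
    ⌊1 / r⌋₊ * r < 1 := by
  have hne : (⌊1 / r⌋₊ : ℝ) ≠ 1 / r := fun h => hint ⟨⌊1 / r⌋₊, by rw [← h]; simp⟩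
  rw [← lt_div_iff₀ hr0]
  exact (Nat.floor_le (by positivity)).lt_of_ne hne

lemma one_le_floor_one_div_add_one_mul (hr0 : 0 < r) : 1 ≤ (⌊1 / r⌋₊ + 1) * r := by
  rw [← div_le_iff₀ hr0]
  exact (Nat.lt_floor_add_one _).le

lemma le_mul_ceil {K : ℕ} (h : 1 ≤ K * r) (n : ℕ) : n ≤ K * ⌈r * n⌉₊ := by
  have : (n : ℝ) ≤ K * ⌈r * n⌉₊ :=
    calc (n : ℝ) ≤ K * r * n := le_mul_of_one_le_left n.cast_nonneg h
      _ ≤ K * ⌈r * n⌉₊ := by rw [mul_assoc]; gcongr; exact Nat.le_ceil _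
  exact_mod_cast this

lemma eventually_mul_ceil_le (hr0 : 0 < r) {k : ℕ} (hkr : k * r < 1) :
    ∀ᶠ n : ℕ in atTop, k * ⌈r * n⌉₊ ≤ n := by
  filter_upwards [tendsto_natCast_atTop_atTop.eventually_ge_atTop (k / (1 - k * r))] with n hn
  rw [div_le_iff₀ (by linarith)] at hn
  have hc : (⌈r * n⌉₊ : ℝ) < r * n + 1 := Nat.ceil_lt_add_one (by positivity)
  have : (k : ℝ) * ⌈r * n⌉₊ ≤ n := by nlinarith [(k.cast_nonneg : (0 : ℝ) ≤ k)]
  exact_mod_cast this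

end ceil

theorem stmt_17 (r : ℝ) (hr0 : 0 < r) (hr1 : r ≤ 1) (hint : ¬ ∃ z : ℤ, (1 / r : ℝ) = z)
    (k : ℕ) (hk : k = ⌊1 / r⌋₊) :
    ∃ N : ℕ, ∀ n ≥ N, ∀ m l : ℕ, m = n - k * ⌈r * n⌉₊ → l = (k + 1) * ⌈r * n⌉₊ - n →
      Q n ⌈r * n⌉₊ ≤ qfun l k + qfun m (k + 1) := by
  have hk1 : 1 ≤ k := hk ▸ one_le_floor_one_div hr0 hr1
  have hkr : k * r < 1 := hk ▸ floor_one_div_mul_lt_one hr0 hint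
  have hk1r : 1 ≤ ((k + 1 : ℕ) : ℝ) * r := by
    push_cast; exact hk ▸ one_le_floor_one_div_add_one_mul hr0
  obtain ⟨N, hN⟩ := Filter.eventually_atTop.1
    ((eventually_mul_ceil_le hr0 hkr).and (Filter.eventually_ge_atTop 1))
  refine ⟨N, fun n hn m l hm hl => ?_⟩
  obtain ⟨hlow, hn1⟩ := hN n hn
  have hup := le_mul_ceil hk1r n
  have hc : 1 ≤ ⌈r * n⌉₊ := Nat.ceil_pos.2 (by positivity)
  have hlm : l + m = ⌈r * n⌉₊ := by subst hm hl; zify [hlow, hup]; ring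
  have hn' : k * l + (k + 1) * m = n := by subst hm hl; zify [hlow, hup]; ring
  obtain ⟨G₁, hχ₁, hω₁⟩ := exists_graph_qfun hk1 l
  obtain ⟨G₂, hχ₂, hω₂⟩ := exists_graph_qfun (Nat.le_add_left 1 k) m
  obtain ⟨G, hχ, hω⟩ := exists_fin_join hn' G₁ G₂
  calc Q n ⌈r * n⌉₊ ≤ G.cliqueNum := Q_le_cliqueNum hc (hlm ▸ (add_le_add hχ₁ hχ₂).trans hχ)
    _ ≤ qfun l k + qfun m (k + 1) := hω.trans (add_le_add hω₁ hω₂)
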